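/- arXiv:1701.01795 — 3 statements merged into one kernel-verified Lean document; each statement's English description precedes it below -/
import Mathlib

section
/- In hyperbolic background geometry with inversive distance I ≥ 0: given radii r_i, r_j, r_k > 0 and weights I_{ij}, I_{ik}, I_{jk} ≥ 0, define edge lengths by cosh l_{ab} = cosh r_a cosh r_b + I_{ab} sinh r_a sinh r_b. If cosh² r_i > I_{jk} + 1, then l_{ij} + l_{ik} > l_{jk}. -/
/-- The inverse hyperbolic cosine on `[1, ∞)`: `arcosh x = log (x + √(x² − 1))`. -/
noncomputable def Real.arcosh' (x : ℝ) : ℝ := Real.log (x + Real.sqrt (x ^ 2 - 1))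

/-!
With `C_ab = cosh l_ab`, the bound `sinh a sinh b ≤ cosh a cosh b` gives
`C_jk ≤ (I_jk + 1) cosh r_j cosh r_k < cosh² r_i cosh r_j cosh r_k ≤ C_ij C_ik`. Since
`cosh (u + v) ≥ cosh u cosh v` for `u, v ≥ 0`, `arcosh` turns this into `l_jk < l_ij + l_ik`.
-/

open Real

theorem Real.arcosh'_eq_arcosh : Real.arcosh' = Real.arcosh := rfl

theorem Real.arcosh_mul_le_add {x y : ℝ} (hx : 1 ≤ x) (hy : 1 ≤ y) :
    arcosh (x * y) ≤ arcosh x + arcosh y := by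
  have hu := arcosh_nonneg hx
  have hv := arcosh_nonneg hy
  have hxy : x * y ≤ cosh (arcosh x + arcosh y) := by
    rw [cosh_add, cosh_arcosh hx, cosh_arcosh hy]
    nlinarith [sinh_nonneg_iff.2 hu, sinh_nonneg_iff.2 hv]
  calc arcosh (x * y) ≤ arcosh (cosh (arcosh x + arcosh y)) :=
        (arcosh_le_arcosh (by positivity) (cosh_pos _)).2 hxy
    _ = arcosh x + arcosh y := arcosh_cosh (add_nonneg hu hv)

theorem Real.sinh_mul_sinh_le_cosh_mul_cosh (a b : ℝ) : sinh a * sinh b ≤ cosh a * cosh b := by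
  linarith [cosh_sub a b, cosh_pos (a - b)]

theorem Real.one_le_cosh_mul_cosh_add {I a b : ℝ} (hI : 0 ≤ I) (ha : 0 ≤ a) (hb : 0 ≤ b) :
    1 ≤ cosh a * cosh b + I * sinh a * sinh b := by
  have hsa := sinh_nonneg_iff.2 ha
  have hsb := sinh_nonneg_iff.2 hb
  nlinarith [one_le_mul_of_one_le_of_one_le (one_le_cosh a) (one_le_cosh b),
    mul_nonneg (mul_nonneg hI hsa) hsb]

theorem Real.cosh_mul_cosh_add_le {I a b : ℝ} (hI : 0 ≤ I) :
    cosh a * cosh b + I * sinh a * sinh b ≤ (I + 1) * (cosh a * cosh b) := by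
  nlinarith [mul_le_mul_of_nonneg_left (sinh_mul_sinh_le_cosh_mul_cosh a b) hI]

theorem Real.cosh_sq_mul_le_mul {I J a b c : ℝ} (hI : 0 ≤ I) (hJ : 0 ≤ J)
    (ha : 0 ≤ a) (hb : 0 ≤ b) (hc : 0 ≤ c) :
    cosh c ^ 2 * (cosh a * cosh b) ≤
      (cosh c * cosh a + I * sinh c * sinh a) * (cosh c * cosh b + J * sinh c * sinh b) := by
  have hsa := sinh_nonneg_iff.2 ha
  have hsb := sinh_nonneg_iff.2 hb
  have hsc := sinh_nonneg_iff.2 hc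
  calc cosh c ^ 2 * (cosh a * cosh b) = (cosh c * cosh a) * (cosh c * cosh b) := by ring
    _ ≤ _ := by gcongr <;> first | positivity | exact le_add_of_nonneg_right (by positivity)

/-- hyperbolic inversive distance edge lengths; if `cosh² rᵢ > I_jk + 1`
then the triangle inequality `l_ij + l_ik > l_jk` holds. -/
theorem stmt_2 (ri rj rk Iij Iik Ijk : ℝ)
    (hri : 0 < ri) (hrj : 0 < rj) (hrk : 0 < rk)
    (hIij : 0 ≤ Iij) (hIik : 0 ≤ Iik) (hIjk : 0 ≤ Ijk)
    (h : Ijk + 1 < (Real.cosh ri) ^ 2) :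
    Real.arcosh' (Real.cosh rj * Real.cosh rk + Ijk * Real.sinh rj * Real.sinh rk) <
      Real.arcosh' (Real.cosh ri * Real.cosh rj + Iij * Real.sinh ri * Real.sinh rj) +
      Real.arcosh' (Real.cosh ri * Real.cosh rk + Iik * Real.sinh ri * Real.sinh rk) := by
  rw [arcosh'_eq_arcosh]
  have hij := one_le_cosh_mul_cosh_add hIij hri.le hrj.le
  have hik := one_le_cosh_mul_cosh_add hIik hri.le hrk.le
  have hjk := one_le_cosh_mul_cosh_add hIjk hrj.le hrk.le
  have hlt : cosh rj * cosh rk + Ijk * sinh rj * sinh rk <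
      (cosh ri * cosh rj + Iij * sinh ri * sinh rj) *
        (cosh ri * cosh rk + Iik * sinh ri * sinh rk) :=
    calc _ ≤ (Ijk + 1) * (cosh rj * cosh rk) := cosh_mul_cosh_add_le hIjk
      _ < cosh ri ^ 2 * (cosh rj * cosh rk) := by gcongr
      _ ≤ _ := cosh_sq_mul_le_mul hIij hIik hrj.le hrk.le hri.le
  calc _ < arcosh ((cosh ri * cosh rj + Iij * sinh ri * sinh rj) *
          (cosh ri * cosh rk + Iik * sinh ri * sinh rk)) :=
        (arcosh_lt_arcosh (by positivity) (by positivity)).2 hlt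
    _ ≤ _ := arcosh_mul_le_add hij hik
end

section
/- Consider the tetrahedral triangulation of S² with vertices i, j, k, l, inversive distance I ≡ 2 on every edge, radii r_i = 1 and r_j = r_k = r_l = x > 0, and Euclidean edge lengths l_{ab} = √(r_a² + r_b² + 2 r_a r_b I_{ab}). Then every face satisfies the triangle inequalities if and only if 0 < x < 4 + √18. -/
/-!
Face `jkl` is equilateral and the faces at `i` are isosceles with legs `a` and base `b`, so the
only nontrivial triangle inequality is `b < 2a`. Squaring, `6x² < 4(x² + 4x + 1)`, i.e.
`x² - 8x - 2 < 0`, whose positive root is `4 + √18`.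
-/

open Real

lemma isosceles_triangle_iff {a b : ℝ} (hb : 0 < b) : (a < a + b ∧ b < a + a) ↔ b < 2 * a := by
  rw [and_iff_right (lt_add_of_pos_right a hb), two_mul]

lemma sq_sub_eight_mul_sub_two_neg_iff {x : ℝ} (hx : 0 ≤ x) :
    x ^ 2 - 8 * x - 2 < 0 ↔ x < 4 + √18 := by
  have h18 : √18 ^ 2 = 18 := sq_sqrt (by norm_num)
  have h4 : 4 < √18 := (lt_sqrt (by norm_num)).2 (by norm_num)
  have hfactor : x ^ 2 - 8 * x - 2 = (x - (4 + √18)) * (x - (4 - √18)) := by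
    linear_combination h18
  rw [hfactor, ← zero_mul (x - (4 - √18)), mul_lt_mul_iff_of_pos_right (by linarith), sub_neg]

lemma sqrt_six_mul_lt_two_mul_sqrt_iff {x : ℝ} (hx : 0 ≤ x) :
    √6 * x < 2 * √(x ^ 2 + 4 * x + 1) ↔ x < 4 + √18 := by
  rw [← pow_lt_pow_iff_left₀ (by positivity) (by positivity) two_ne_zero, mul_pow, mul_pow,
    sq_sqrt (by norm_num), sq_sqrt (by positivity), ← sq_sub_eight_mul_sub_two_neg_iff hx]
  constructor <;> intro h <;> linarith

/-- on the tetrahedral triangulation with `I ≡ 2`, `rᵢ = 1`,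
`r_j = r_k = r_l = x > 0`, the Euclidean edge lengths are
`l_ij = l_ik = l_il = √(x² + 4x + 1)` and `l_jk = l_jl = l_kl = √6 x`; every face
satisfies the (strict) triangle inequalities iff `0 < x < 4 + √18`. -/
theorem stmt_5 (x : ℝ) (hx : 0 < x) :
    (let a := Real.sqrt (x ^ 2 + 4 * x + 1)
     let b := Real.sqrt 6 * x
     -- the three isoceles faces containing vertex i, with sides a, a, b:
     ((a < a + b ∧ b < a + a) ∧
     -- the equilateral face jkl with sides b, b, b:
      b < b + b)) ↔ x < 4 + Real.sqrt 18 := by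
  have hb : 0 < √6 * x := by positivity
  simp only
  rw [and_iff_left (lt_add_of_pos_right _ hb), isosceles_triangle_iff hb]
  exact sqrt_six_mul_lt_two_mul_sqrt_iff hx.le
end

section
/- On the tetrahedral triangulation of S² with I ≡ 2, radii r = (1, x, x, x) with 0 < x < 4+√18, the combinatorial curvatures R_a = K_a/r_a² satisfy: R_i = 2π − 6 arcsin( (√6 x/2)/√(x²+4x+1) ) and R_j = R_k = R_l = (1/x²)(2π/3 + 2 arcsin( (√6 x/2)/√(x²+4x+1) )). -/
/-!
With `s = (b/2)/a`, the law of cosines gives the angles of an isosceles triangle with legs `a`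
and base `b` as `cos θ_apex = 1 - 2 s²` and `cos θ_base = s`, so `θ_apex = 2 arcsin s` and
`θ_base = π/2 - arcsin s`; the equilateral face has angles `π/3`. The bound `x < 4 + √18` is
exactly the triangle inequality `√6 x ≤ 2 √(x² + 4x + 1)`, which keeps `s ≤ 1`.
-/

open Real

namespace Real

theorem arccos_one_sub_two_mul_sq {s : ℝ} (h0 : 0 ≤ s) (h1 : s ≤ 1) :
    arccos (1 - 2 * s ^ 2) = 2 * arcsin s := by
  rw [← sin_arcsin (by linarith) h1, ← cos_two_mul_eq_one_sub, sin_arcsin (by linarith) h1,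
    arccos_cos]
  · linarith [arcsin_nonneg.mpr h0]
  · linarith [arcsin_le_pi_div_two s]

theorem arccos_isosceles_apex {a b : ℝ} (ha : 0 < a) (hb : 0 ≤ b) (hba : b ≤ 2 * a) :
    arccos ((a ^ 2 + a ^ 2 - b ^ 2) / (2 * a * a)) = 2 * arcsin (b / 2 / a) := by
  have hs1 : b / 2 / a ≤ 1 := by rw [div_le_one ha]; linarith
  rw [← arccos_one_sub_two_mul_sq (by positivity) hs1]
  congr 1
  field_simp
  ring

theorem arccos_isosceles_base {a b : ℝ} (ha : a ≠ 0) (hb : b ≠ 0) :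
    arccos ((a ^ 2 + b ^ 2 - a ^ 2) / (2 * a * b)) = π / 2 - arcsin (b / 2 / a) := by
  rw [← arccos_eq_pi_div_two_sub_arcsin]
  congr 1
  field_simp
  ring

theorem arccos_equilateral {b : ℝ} (hb : b ≠ 0) :
    arccos ((b ^ 2 + b ^ 2 - b ^ 2) / (2 * b * b)) = π / 3 := by
  have h : (b ^ 2 + b ^ 2 - b ^ 2) / (2 * b * b) = cos (π / 3) := by
    rw [cos_pi_div_three]
    field_simp
    ring
  rw [h, arccos_cos (by positivity) (by linarith [pi_pos])]

end Real

theorem sqrt_six_mul_le_two_mul_sqrt {x : ℝ} (hx : 0 < x) (hx' : x < 4 + √18) :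
    √6 * x ≤ 2 * √(x ^ 2 + 4 * x + 1) := by
  have h4 : 4 < √18 := (lt_sqrt (by norm_num)).mpr (by norm_num)
  have h18 : (x - 4) ^ 2 < 18 := by nlinarith [sq_sqrt (show (0 : ℝ) ≤ 18 by norm_num)]
  rw [← pow_le_pow_iff_left₀ (by positivity) (by positivity) two_ne_zero, mul_pow, mul_pow,
    sq_sqrt (by norm_num), sq_sqrt (by positivity)]
  nlinarith

/-- on the tetrahedral triangulation with `I ≡ 2`, `r = (1, x, x, x)` and
`0 < x < 4+√18`, the combinatorial curvatures `R_a = K_a / r_a²` are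
`R_i = 2π − 6 arcsin((√6 x/2)/√(x²+4x+1))` and
`R_j = R_k = R_l = (1/x²)(2π/3 + 2 arcsin((√6 x/2)/√(x²+4x+1)))`.
The inner angles of the faces are expressed via the law of cosines: each face containing
`i` is isoceles with legs `a = √(x²+4x+1)` and base `b = √6 x`; the face `jkl` is
equilateral with side `b`. -/
theorem stmt_10 (x : ℝ) (hx : 0 < x) (hx' : x < 4 + Real.sqrt 18) :
    (let a := Real.sqrt (x ^ 2 + 4 * x + 1)
     let b := Real.sqrt 6 * x
     -- apex angle at vertex i in each of the three isoceles faces (side opposite is b):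
     let θi := Real.arccos ((a ^ 2 + a ^ 2 - b ^ 2) / (2 * a * a))
     -- base angle at vertex j (or k, l) in an isoceles face (side opposite is a):
     let θj := Real.arccos ((a ^ 2 + b ^ 2 - a ^ 2) / (2 * a * b))
     -- angle of the equilateral face jkl:
     let θe := Real.arccos ((b ^ 2 + b ^ 2 - b ^ 2) / (2 * b * b))
     -- curvature at i (r_i = 1): K_i = 2π − 3 θi
     ((2 * Real.pi - 3 * θi) / 1 ^ 2 =
        2 * Real.pi - 6 * Real.arcsin ((Real.sqrt 6 * x / 2) / Real.sqrt (x ^ 2 + 4 * x + 1)) ∧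
     -- curvature at j (r_j = x): K_j = 2π − 2 θj − θe
      (2 * Real.pi - (2 * θj + θe)) / x ^ 2 =
        (1 / x ^ 2) * (2 * Real.pi / 3 +
          2 * Real.arcsin ((Real.sqrt 6 * x / 2) / Real.sqrt (x ^ 2 + 4 * x + 1))))) := by
  intro a b θi θj θe
  have ha : 0 < a := sqrt_pos.mpr (by positivity)
  have hb : 0 < b := by positivity
  have hθi : θi = 2 * arcsin (b / 2 / a) :=
    arccos_isosceles_apex ha hb.le (sqrt_six_mul_le_two_mul_sqrt hx hx')
  have hθj : θj = π / 2 - arcsin (b / 2 / a) := arccos_isosceles_base ha.ne' hb.ne'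
  have hθe : θe = π / 3 := arccos_equilateral hb.ne'
  rw [hθi, hθj, hθe]
  simp only [a, b]
  constructor
  · ring
  · field_simp
    ring
end
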